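/- Let C ⊆ F_{q^2}^n be an additive code generated (over F_q) by matrix G, C' generated by G', E ⊆ F_{q^2}^m generated by matrix E_0, and suppose the juxtaposed code M ⊆ F_{q^2}^{n+m} is generated by the block matrix [[G, 0],[G', E_0]]. If C is trace self-orthogonal and the code generated by (G' | E_0) is trace ACD and trace-orthogonal to (G | 0), then M decomposes as M = R_t(M) ⊕ M_e with R_t(M) = {(c,0) : c ∈ C} and M_e the code generated by (G' | E_0). -/

import Mathlib

/-! If `M = P ⊔ W` with `P` totally isotropic, `P ⊥ W` and `W` nondegenerate, then the
radical of `M` is exactly `P`: writing `v = p + w`, orthogonality of `v` to `W` reduces to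
orthogonality of `w` to `W`, which forces `w = 0`. Only additivity in the first argument and
symmetry of the form are needed; the trace form is symmetric because the conjugation is an
involution. -/

/-- The trace form `(u,v)_t = Σ_j tr(u_j · conj(v_j))` on `F_{q^2}^n`, where
`conj = σ` is the conjugation of `F_{q^2}/F_q` and `tr(x) = x + σ x`. -/
def tformC {F K : Type*} [Field F] [Field K] [Algebra F K] (σ : K →ₐ[F] K) {n : ℕ}
    (u v : Fin n → K) : K :=
  ∑ j, (u j * σ (v j) + σ (u j * σ (v j)))

/-- The trace dual `C^{⊥t}` of an additive (`F_q`-linear) code `C ⊆ F_{q^2}^n`. -/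
def traceDual {F K : Type*} [Field F] [Field K] [Algebra F K] (σ : K →ₐ[F] K) {n : ℕ}
    (C : Submodule F (Fin n → K)) : Submodule F (Fin n → K) where
  carrier := {u | ∀ v ∈ C, tformC σ u v = 0}
  add_mem' := by
    intro a b ha hb v hv
    have h : tformC σ (a + b) v = tformC σ a v + tformC σ b v := by
      simp only [tformC, Pi.add_apply, add_mul, map_add]
      rw [← Finset.sum_add_distrib]
      exact Finset.sum_congr rfl (fun j _ => by ring)
    rw [h, ha v hv, hb v hv, add_zero]
  zero_mem' := by
    intro v hv
    simp [tformC]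
  smul_mem' := by
    intro c a ha v hv
    have h : tformC σ (c • a) v = c • tformC σ a v := by
      simp only [tformC, Pi.smul_apply, Algebra.smul_def, map_mul, AlgHom.commutes]
      rw [Finset.mul_sum]
      exact Finset.sum_congr rfl (fun j _ => by ring)
    rw [h, ha v hv, smul_zero]

/-- The trace form on the juxtaposition `F_{q^2}^n × F_{q^2}^m`: sum of the trace
forms on the two blocks. -/
def tformC2 {F K : Type*} [Field F] [Field K] [Algebra F K] (σ : K →ₐ[F] K) {n m : ℕ}
    (u v : (Fin n → K) × (Fin m → K)) : K :=
  tformC σ u.1 v.1 + tformC σ u.2 v.2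

def orthRadical {R V A : Type*} [Semiring R] [AddCommMonoid V] [Module R V] [Zero A]
    (B : V → V → A) (M : Submodule R V) : Set V :=
  {v ∈ (M : Set V) | ∀ w ∈ M, B v w = 0}

section SymmetricPairing

variable {R V A : Type*} [Semiring R] [AddCommMonoid V] [Module R V] [AddCommMonoid A]
  {B : V → V → A} {P W : Submodule R V}

theorem disjoint_of_orthogonal_of_nondegenerate (hsymm : ∀ u v, B u v = B v u)
    (hWP : ∀ w ∈ W, ∀ p ∈ P, B w p = 0)
    (hW : ∀ w ∈ W, (∀ w' ∈ W, B w w' = 0) → w = 0) :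
    Disjoint P W :=
  Submodule.disjoint_def.mpr fun x hxP hxW =>
    hW x hxW fun w' hw' => (hsymm x w').trans (hWP w' hw' x hxP)

theorem orthRadical_sup_eq (hadd : ∀ a b v, B (a + b) v = B a v + B b v)
    (hsymm : ∀ u v, B u v = B v u) (hP : ∀ p ∈ P, ∀ p' ∈ P, B p p' = 0)
    (hWP : ∀ w ∈ W, ∀ p ∈ P, B w p = 0)
    (hW : ∀ w ∈ W, (∀ w' ∈ W, B w w' = 0) → w = 0) :
    orthRadical B (P ⊔ W) = P := by
  ext v
  constructor
  · rintro ⟨hv, hvorth⟩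
    obtain ⟨p, hp, w, hw, rfl⟩ := Submodule.mem_sup.mp hv
    have hw0 : w = 0 := hW w hw fun w' hw' => by
      have h := hvorth w' (Submodule.mem_sup_right hw')
      rwa [hadd, hsymm p, hWP w' hw' p hp, zero_add] at h
    simpa [hw0] using hp
  · intro hp
    refine ⟨Submodule.mem_sup_left hp, fun u hu => ?_⟩
    obtain ⟨p', hp', w, hw, rfl⟩ := Submodule.mem_sup.mp hu
    rw [hsymm, hadd, hsymm p', hP v hp p' hp', hWP w hw v hp, add_zero]

end SymmetricPairing

section TraceForm

variable {F K : Type*} [Field F] [Field K] [Algebra F K] (σ : K →ₐ[F] K) {n m : ℕ}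

theorem tformC_comm (hσ : ∀ x, σ (σ x) = x) (u v : Fin n → K) :
    tformC σ u v = tformC σ v u :=
  Finset.sum_congr rfl fun j _ => by simp only [map_mul, hσ]; ring

theorem tformC_add_left (a b v : Fin n → K) :
    tformC σ (a + b) v = tformC σ a v + tformC σ b v := by
  simp only [tformC, Pi.add_apply, add_mul, map_add, ← Finset.sum_add_distrib]
  exact Finset.sum_congr rfl fun j _ => by ring

theorem tformC2_comm (hσ : ∀ x, σ (σ x) = x) (u v : (Fin n → K) × (Fin m → K)) :
    tformC2 σ u v = tformC2 σ v u := by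
  simp only [tformC2, tformC_comm σ hσ]

theorem tformC2_add_left (a b v : (Fin n → K) × (Fin m → K)) :
    tformC2 σ (a + b) v = tformC2 σ a v + tformC2 σ b v := by
  simp only [tformC2, Prod.fst_add, Prod.snd_add, tformC_add_left]
  ring

theorem tformC2_mk_zero (u v : Fin n → K) :
    tformC2 σ ((u, 0) : (Fin n → K) × (Fin m → K)) (v, 0) = tformC σ u v := by
  simp [tformC2, tformC]

end TraceForm

theorem forall_mem_prod_bot {R M₁ M₂ : Type*} [Semiring R] [AddCommMonoid M₁] [Module R M₁]
    [AddCommMonoid M₂] [Module R M₂] {C : Submodule R M₁} {p : M₁ × M₂ → Prop} :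
    (∀ x ∈ C.prod (⊥ : Submodule R M₂), p x) ↔ ∀ c ∈ C, p (c, 0) := by
  refine ⟨fun h c hc => h (c, 0) ⟨hc, Submodule.zero_mem _⟩, ?_⟩
  rintro h ⟨c, z⟩ ⟨hc, hz⟩
  obtain rfl : z = 0 := (Submodule.mem_bot R).mp hz
  exact h c hc

theorem juxtaposed_decomposition_general (F K : Type*) [Field F] [Field K]
    [Algebra F K] (σ : K →ₐ[F] K) (hσ : ∀ x, σ (σ x) = x) (n m : ℕ)
    (C : Submodule F (Fin n → K))
    (W : Submodule F ((Fin n → K) × (Fin m → K)))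
    (M : Submodule F ((Fin n → K) × (Fin m → K)))
    (hM : M = (Submodule.prod C (⊥ : Submodule F (Fin m → K))) ⊔ W)
    (hCso : ∀ u ∈ C, ∀ v ∈ C, tformC σ u v = 0)
    (hWacd : ∀ w ∈ W, (∀ w' ∈ W, tformC2 σ w w' = 0) → w = 0)
    (hWC : ∀ w ∈ W, ∀ c ∈ C, tformC2 σ w (c, 0) = 0) :
    ({v ∈ (M : Set ((Fin n → K) × (Fin m → K))) | ∀ w ∈ M, tformC2 σ v w = 0}
        = (Submodule.prod C (⊥ : Submodule F (Fin m → K)) :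
            Set ((Fin n → K) × (Fin m → K)))) ∧
    Disjoint (Submodule.prod C (⊥ : Submodule F (Fin m → K))) W ∧
    (Submodule.prod C (⊥ : Submodule F (Fin m → K))) ⊔ W = M := by
  subst hM
  have hP : ∀ p ∈ C.prod (⊥ : Submodule F (Fin m → K)), ∀ p' ∈ C.prod ⊥,
      tformC2 σ p p' = 0 :=
    forall_mem_prod_bot.mpr fun c hc => forall_mem_prod_bot.mpr fun c' hc' => by
      rw [tformC2_mk_zero, hCso c hc c' hc']
  have hWP : ∀ w ∈ W, ∀ p ∈ C.prod ⊥, tformC2 σ w p = 0 :=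
    fun w hw => forall_mem_prod_bot.mpr (hWC w hw)
  exact ⟨orthRadical_sup_eq (tformC2_add_left σ) (tformC2_comm σ hσ) hP hWP hWacd,
    disjoint_of_orthogonal_of_nondegenerate (tformC2_comm σ hσ) hWP hWacd, rfl⟩

/-- Juxtaposed-code decomposition: if `C ⊆ F_{q^2}^n` is trace self-orthogonal,
`W ⊆ F_{q^2}^{n+m}` (the code generated by `(G'|E_0)`) is trace ACD and
trace-orthogonal to `(G|0)` (i.e. to `C × {0}`), then the code
`M = (C × {0}) + W` generated by the block matrix `[[G,0],[G',E_0]]` satisfies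
`M = R_t(M) ⊕ M_e` with `R_t(M) = C × {0}` and `M_e = W`. -/
theorem juxtaposed_decomposition (F K : Type*) [Field F] [Fintype F] [Field K]
    [Algebra F K] (σ : K →ₐ[F] K) (hσ : ∀ x, σ (σ x) = x) (n m : ℕ)
    (C : Submodule F (Fin n → K))
    (W : Submodule F ((Fin n → K) × (Fin m → K)))
    (M : Submodule F ((Fin n → K) × (Fin m → K)))
    (hM : M = (Submodule.prod C (⊥ : Submodule F (Fin m → K))) ⊔ W)
    (hCso : ∀ u ∈ C, ∀ v ∈ C, tformC σ u v = 0)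
    (hWacd : ∀ w ∈ W, (∀ w' ∈ W, tformC2 σ w w' = 0) → w = 0)
    (hWC : ∀ w ∈ W, ∀ c ∈ C, tformC2 σ w (c, 0) = 0) :
    ({v ∈ (M : Set ((Fin n → K) × (Fin m → K))) | ∀ w ∈ M, tformC2 σ v w = 0}
        = (Submodule.prod C (⊥ : Submodule F (Fin m → K)) :
            Set ((Fin n → K) × (Fin m → K)))) ∧
    Disjoint (Submodule.prod C (⊥ : Submodule F (Fin m → K))) W ∧
    (Submodule.prod C (⊥ : Submodule F (Fin m → K))) ⊔ W = M :=
  juxtaposed_decomposition_general F K σ hσ n m C W M hM hCso hWacd hWC
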